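/- Let (ξᵢ)_{1≤i≤N} be i.i.d. with law μ and (ξ̂^k)_{1≤k≤p} i.i.d. with law μ independent of the ξᵢ. If g : (ℝ^d)^p → ℝ is integrable (e.g. E sup|δ^p U/δm^p| < ∞ with g(y) = δ^p U/δm^p(μ)(y)), and the index tuple (i₁,...,i_p) ∈ {1,...,N}^p has at least one index i_k different from all others, then E[∫ g(y₁,...,y_p) ⊗_{k=1}^p (δ_{ξ_{i_k}} - δ_{ξ̂^k})(dy_k)] = 0. -/

import Mathlib

/-!
Expanding the product of the signed measures `δ_{ξ_{i_k}} - δ_{ξ̂ᵏ}` gives a signed sum over the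
sets `s` of coordinates where `ξ_{i_k}` is chosen. Pair `s` with `s ∪ {k₀}` for `k₀ ∉ s`: the two
terms have opposite signs, and their integrands differ only by exchanging `ξ_{i_{k₀}}` and `ξ̂^{k₀}`.
Since `i_{k₀}` occurs nowhere else, neither variable appears elsewhere in either integrand, and
swapping two i.i.d. members of an independent family does not change the joint law, so the
expectations agree and every pair cancels.
-/

open MeasureTheory ProbabilityTheory

open Finset in
theorem Finset.sum_powerset_neg_one_pow_card_sub_mul_eq_zero {α R : Type*} [DecidableEq α]
    [CommRing R] {s : Finset α} {a : α} (ha : a ∈ s) (F : Finset α → R)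
    (hF : ∀ t, a ∉ t → F (insert a t) = F t) :
    ∑ t ∈ s.powerset, (-1 : R) ^ (#s - #t) * F t = 0 := by
  obtain ⟨u, hau, rfl⟩ : ∃ u, a ∉ u ∧ s = insert a u :=
    ⟨s.erase a, notMem_erase a s, (insert_erase ha).symm⟩
  rw [sum_powerset_insert hau, ← sum_add_distrib]
  refine sum_eq_zero fun t ht => ?_
  have hat : a ∉ t := fun h => hau (mem_powerset.1 ht h)
  have htu : #t ≤ #u := card_le_card (mem_powerset.1 ht)
  have hsign : #(insert a u) - #t = (#(insert a u) - #(insert a t)) + 1 := by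
    rw [card_insert_of_notMem hau, card_insert_of_notMem hat]
    omega
  rw [hF t hat, hsign, pow_succ]
  ring

theorem ProbabilityTheory.iIndepFun.identDistrib_comp_equiv {Ω ι E : Type*}
    [MeasurableSpace Ω] [MeasurableSpace E] [Fintype ι] {P : Measure Ω} {Z : ι → Ω → E}
    (hZ : iIndepFun Z P) (hmeas : ∀ j, Measurable (Z j)) (σ : ι ≃ ι)
    (hσ : ∀ j, P.map (Z (σ j)) = P.map (Z j)) :
    IdentDistrib (fun ω j => Z (σ j) ω) (fun ω j => Z j ω) P P where
  aemeasurable_fst := (measurable_pi_lambda _ fun j => hmeas (σ j)).aemeasurable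
  aemeasurable_snd := (measurable_pi_lambda _ hmeas).aemeasurable
  map_eq := by
    rw [(hZ.precomp σ.injective).map_fun_eq_pi_map fun j => (hmeas (σ j)).aemeasurable,
      hZ.map_fun_eq_pi_map fun j => (hmeas j).aemeasurable]
    simp_rw [hσ]

section MixedSample

variable {ι κ E : Type*} [DecidableEq κ]

/-- The sample `inl n` stands for `ξₙ` and `inr k` for `ξ̂ᵏ`; coordinate `k` takes `ξ_{i k}` if
`k ∈ s` and `ξ̂ᵏ` otherwise. -/
def mixSample (i : κ → ι) (s : Finset κ) (z : ι ⊕ κ → E) (k : κ) : E :=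
  if k ∈ s then z (.inl (i k)) else z (.inr k)

theorem measurable_mixSample [MeasurableSpace E] (i : κ → ι) (s : Finset κ) :
    Measurable (mixSample (E := E) i s) :=
  measurable_pi_lambda _ fun k => by
    unfold mixSample
    split_ifs <;> exact measurable_pi_apply _

theorem mixSample_insert_comp_swap [DecidableEq ι] {i : κ → ι} {k₀ : κ}
    (hk₀ : ∀ j, j ≠ k₀ → i j ≠ i k₀) {s : Finset κ} (hs : k₀ ∉ s) (z : ι ⊕ κ → E) :
    mixSample i (insert k₀ s) (z ∘ Equiv.swap (.inl (i k₀)) (.inr k₀)) = mixSample i s z := by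
  funext k
  by_cases hk : k = k₀
  · subst hk
    simp [mixSample, hs]
  · have h₁ : (Sum.inl (i k) : ι ⊕ κ) ≠ .inl (i k₀) := fun h => hk₀ k hk (Sum.inl.inj h)
    have h₂ : (Sum.inr k : ι ⊕ κ) ≠ .inr k₀ := fun h => hk (Sum.inr.inj h)
    simp [mixSample, hk, Equiv.swap_apply_of_ne_of_ne, h₁, h₂]

theorem integral_mixSample_insert {Ω G : Type*} [MeasurableSpace Ω] [MeasurableSpace E]
    [Fintype ι] [Fintype κ] [DecidableEq ι] [NormedAddCommGroup G] [NormedSpace ℝ G] [MeasurableSpace G] [BorelSpace G]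
    {P : Measure Ω} {Z : ι ⊕ κ → Ω → E} (hZ : iIndepFun Z P) (hmeas : ∀ j, Measurable (Z j))
    {i : κ → ι} {k₀ : κ} (hk₀ : ∀ j, j ≠ k₀ → i j ≠ i k₀)
    (hlaw : P.map (Z (.inl (i k₀))) = P.map (Z (.inr k₀)))
    {g : (κ → E) → G} (hg : Measurable g) {s : Finset κ} (hs : k₀ ∉ s) :
    ∫ ω, g (mixSample i (insert k₀ s) fun j => Z j ω) ∂P =
      ∫ ω, g (mixSample i s fun j => Z j ω) ∂P := by
  set σ := Equiv.swap (Sum.inl (i k₀) : ι ⊕ κ) (.inr k₀)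
  have hσ : ∀ j, P.map (Z (σ j)) = P.map (Z j) := by
    intro j
    rcases eq_or_ne j (.inl (i k₀)) with rfl | h₁
    · simp [σ, hlaw]
    rcases eq_or_ne j (.inr k₀) with rfl | h₂
    · simp [σ, hlaw]
    · simp [σ, Equiv.swap_apply_of_ne_of_ne h₁ h₂]
  have h := ((hZ.identDistrib_comp_equiv hmeas σ hσ).comp
    (hg.comp (measurable_mixSample i (insert k₀ s)))).integral_eq
  refine h.symm.trans (integral_congr_ae (ae_of_all _ fun ω => ?_))
  exact congrArg g (mixSample_insert_comp_swap hk₀ hs fun j => Z j ω)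

end MixedSample

theorem stmt7_general {d N p : ℕ}
    {Ω : Type*} [MeasurableSpace Ω] (P : Measure Ω)
    (μ : Measure (Fin d → ℝ))
    (ξ : Fin N → Ω → (Fin d → ℝ)) (ξhat : Fin p → Ω → (Fin d → ℝ))
    (hmeas : ∀ i, Measurable (ξ i)) (hmeas' : ∀ k, Measurable (ξhat k))
    (hindep : iIndepFun (Sum.elim ξ ξhat) P)
    (hlaw : ∀ i, P.map (ξ i) = μ) (hlaw' : ∀ k, P.map (ξhat k) = μ)
    (g : (Fin p → Fin d → ℝ) → ℝ) (hg : Measurable g)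
    (i : Fin p → Fin N) (k₀ : Fin p) (hk₀ : ∀ j, j ≠ k₀ → i j ≠ i k₀) :
    ∑ s : Finset (Fin p), (-1 : ℝ) ^ (p - s.card) *
        ∫ ω, g (fun k => if k ∈ s then ξ (i k) ω else ξhat k ω) ∂P = 0 := by
  have hmeasZ : ∀ j, Measurable (Sum.elim ξ ξhat j) := Sum.forall.2 ⟨hmeas, hmeas'⟩
  have hsum := Finset.sum_powerset_neg_one_pow_card_sub_mul_eq_zero (Finset.mem_univ k₀)
    (fun s => ∫ ω, g (mixSample i s fun j => Sum.elim ξ ξhat j ω) ∂P)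
    (fun s hs => integral_mixSample_insert hindep hmeasZ hk₀
      ((hlaw (i k₀)).trans (hlaw' k₀).symm) hg hs)
  rw [Finset.powerset_univ, Finset.card_univ, Fintype.card_fin] at hsum
  exact hsum

/-- Let `(ξᵢ)_{1≤i≤N}` be i.i.d. with law `μ` and `(ξ̂ᵏ)_{1≤k≤p}`
i.i.d. with law `μ` independent of the `ξᵢ`.  If `g : (ℝ^d)^p → ℝ` is integrable
and the index tuple `(i₁, …, i_p)` has at least one index `i_{k₀}` different from all
the others, then `E[∫ g(y₁,…,y_p) ⊗_{k=1}^p (δ_{ξ_{i_k}} - δ_{ξ̂ᵏ})(dy_k)] = 0`.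
(The product signed-measure integral is expanded as a signed sum over the `2^p`
choices of `ξ_{i_k}` or `ξ̂ᵏ` in each coordinate.) -/
theorem stmt7 {d N p : ℕ}
    {Ω : Type*} [MeasurableSpace Ω] (P : Measure Ω) [IsProbabilityMeasure P]
    (μ : Measure (Fin d → ℝ)) [IsProbabilityMeasure μ]
    (ξ : Fin N → Ω → (Fin d → ℝ)) (ξhat : Fin p → Ω → (Fin d → ℝ))
    (hmeas : ∀ i, Measurable (ξ i)) (hmeas' : ∀ k, Measurable (ξhat k))
    (hindep : iIndepFun (Sum.elim ξ ξhat) P)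
    (hlaw : ∀ i, P.map (ξ i) = μ) (hlaw' : ∀ k, P.map (ξhat k) = μ)
    (g : (Fin p → Fin d → ℝ) → ℝ) (hg : Measurable g)
    (i : Fin p → Fin N) (k₀ : Fin p) (hk₀ : ∀ j, j ≠ k₀ → i j ≠ i k₀)
    (hint : ∀ s : Finset (Fin p),
      Integrable (fun ω => g (fun k => if k ∈ s then ξ (i k) ω else ξhat k ω)) P) :
    ∑ s : Finset (Fin p), (-1 : ℝ) ^ (p - s.card) *
        ∫ ω, g (fun k => if k ∈ s then ξ (i k) ω else ξhat k ω) ∂P = 0 :=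
  stmt7_general P μ ξ ξhat hmeas hmeas' hindep hlaw hlaw' g hg i k₀ hk₀
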